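/- Let P₁ and P₂ be two accept-reject-based Markov kernels with the same proposal density q and acceptance functions a₁ and a₂ respectively, both having Π as invariant distribution. If a₁(θ,θ') ≥ a₂(θ,θ') for all θ, θ', then for every t ∈ ℤ₊ and every θ ∈ Θ, ‖P₂^t(θ,·) − Π‖_TV ≥ (1 − A₂(θ))^t ≥ (1 − A₁(θ))^t, where A_i(θ) = ∫ a_i(θ,θ') q(θ,θ') dλ(θ'). -/

import Mathlib

open MeasureTheory

variable {Ω : Type*} [MeasurableSpace Ω]

/-- The acceptance probability `A(θ) = ∫ a(θ,θ') q(θ,θ') dλ(θ')`. -/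
noncomputable def acceptProb (lam : Measure Ω) (a q : Ω → Ω → ℝ) (θ : Ω) : ℝ :=
  ∫ θ', a θ θ' * q θ θ' ∂lam

/-- The accept-reject-based Markov kernel
`P(θ,B) = ∫_B a(θ,θ') q(θ,θ') dλ(θ') + δ_θ(B) (1 − A(θ))`. -/
noncomputable def arbKernel (lam : Measure Ω) (a q : Ω → Ω → ℝ) (θ : Ω) : Measure Ω :=
  lam.withDensity (fun θ' => ENNReal.ofReal (a θ θ' * q θ θ')) +
    (ENNReal.ofReal (1 - acceptProb lam a q θ)) • Measure.dirac θ

/-- The `t`-step iterate `P^t(θ,·)` of a Markov kernel, with `P^0(θ,·) = δ_θ`. -/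
noncomputable def iterK (P : Ω → Measure Ω) : ℕ → Ω → Measure Ω
  | 0 => fun θ => Measure.dirac θ
  | (t + 1) => fun θ => (iterK P t θ).bind P

/-- Total variation distance:
`‖μ − ν‖_TV = sup { ∫ f dμ − ∫ f dν : f measurable, 0 ≤ f ≤ 1 }`. -/
noncomputable def tvDist (μ ν : Measure Ω) : ℝ :=
  ⨆ f : {f : Ω → ℝ // Measurable f ∧ ∀ x, f x ∈ Set.Icc (0:ℝ) 1},
    (∫ x, f.1 x ∂μ - ∫ x, f.1 x ∂ν)

/-!
Starting from `θ`, the chain stays put at each step with probability `1 - A(θ)`, because the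
continuous part of the kernel gives no mass to the `λ`-null singleton `{θ}`. Hence
`P^t(θ,{θ}) ≥ (1 - A(θ))^t`, while `Π({θ}) = 0` since `Π ≪ λ`; testing the total variation
distance against the indicator of `{θ}` gives the lower bound. A larger acceptance function has a
larger acceptance probability, which gives the comparison.
-/

open ProbabilityTheory

section Iterate

variable {P : Ω → Measure Ω}

lemma isProbabilityMeasure_iterK (hP : Measurable P) [∀ θ, IsProbabilityMeasure (P θ)]
    (t : ℕ) (θ : Ω) : IsProbabilityMeasure (iterK P t θ) := by
  induction t with
  | zero => exact Measure.dirac.isProbabilityMeasure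
  | succ t ih =>
    constructor
    rw [iterK, Measure.bind_apply MeasurableSet.univ hP.aemeasurable]
    simp

lemma pow_apply_singleton_le_iterK_apply (hP : Measurable P) {θ : Ω}
    (hθ : MeasurableSet {θ}) (t : ℕ) : P θ {θ} ^ t ≤ iterK P t θ {θ} := by
  induction t with
  | zero => simp [iterK]
  | succ t ih =>
    rw [iterK, Measure.bind_apply hθ hP.aemeasurable, pow_succ']
    calc P θ {θ} * P θ {θ} ^ t ≤ P θ {θ} * iterK P t θ {θ} := by gcongr
      _ = ∫⁻ x in {θ}, P x {θ} ∂iterK P t θ :=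
        (lintegral_singleton' ((Measure.measurable_coe hθ).comp hP) θ).symm
      _ ≤ ∫⁻ x, P x {θ} ∂iterK P t θ := setLIntegral_le_lintegral _ _

end Iterate

lemma measureReal_sub_le_tvDist (μ ν : Measure Ω) [IsProbabilityMeasure μ] {s : Set Ω}
    (hs : MeasurableSet s) : μ.real s - ν.real s ≤ tvDist μ ν := by
  have hbdd : BddAbove (Set.range
      fun f : {f : Ω → ℝ // Measurable f ∧ ∀ x, f x ∈ Set.Icc (0:ℝ) 1} =>
        ∫ x, f.1 x ∂μ - ∫ x, f.1 x ∂ν) := by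
    refine ⟨1, ?_⟩
    rintro _ ⟨⟨f, -, hf01⟩, rfl⟩
    have hμ : ∫ x, f x ∂μ ≤ 1 := by
      calc ∫ x, f x ∂μ ≤ ∫ _, (1 : ℝ) ∂μ :=
            integral_mono_of_nonneg (ae_of_all _ fun x => (hf01 x).1) (integrable_const 1)
              (ae_of_all _ fun x => (hf01 x).2)
        _ = 1 := by simp
    have hν : 0 ≤ ∫ x, f x ∂ν := integral_nonneg fun x => (hf01 x).1
    linarith
  refine le_ciSup_of_le hbdd ⟨s.indicator 1, measurable_one.indicator hs, fun x => ?_⟩ ?_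
  · by_cases hx : x ∈ s <;> simp [hx]
  · simp [integral_indicator_one hs]

structure IsARBPair (lam : Measure Ω) (a q : Ω → Ω → ℝ) : Prop where
  measurable_a : Measurable (Function.uncurry a)
  measurable_q : Measurable (Function.uncurry q)
  a_mem_Icc : ∀ θ θ', a θ θ' ∈ Set.Icc (0 : ℝ) 1
  q_nonneg : ∀ θ θ', 0 ≤ q θ θ'
  integral_q : ∀ θ, ∫ θ', q θ θ' ∂lam = 1

namespace IsARBPair

variable {lam : Measure Ω} {a q : Ω → Ω → ℝ}

lemma integrable_mul (h : IsARBPair lam a q) (θ : Ω) :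
    Integrable (fun θ' => a θ θ' * q θ θ') lam := by
  refine (integrable_of_integral_eq_one (h.integral_q θ)).bdd_mul (c := 1)
    (h.measurable_a.comp measurable_prodMk_left).aestronglyMeasurable
    (ae_of_all _ fun θ' => ?_)
  rw [Real.norm_eq_abs, abs_of_nonneg (h.a_mem_Icc θ θ').1]
  exact (h.a_mem_Icc θ θ').2

lemma acceptProb_nonneg (h : IsARBPair lam a q) (θ : Ω) : 0 ≤ acceptProb lam a q θ :=
  integral_nonneg fun θ' => mul_nonneg (h.a_mem_Icc θ θ').1 (h.q_nonneg θ θ')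

lemma acceptProb_le_one (h : IsARBPair lam a q) (θ : Ω) : acceptProb lam a q θ ≤ 1 :=
  calc acceptProb lam a q θ ≤ ∫ θ', q θ θ' ∂lam :=
        integral_mono (h.integrable_mul θ) (integrable_of_integral_eq_one (h.integral_q θ))
          fun θ' => mul_le_of_le_one_left (h.q_nonneg θ θ') (h.a_mem_Icc θ θ').2
    _ = 1 := h.integral_q θ

lemma isProbabilityMeasure_arbKernel (h : IsARBPair lam a q) (θ : Ω) :
    IsProbabilityMeasure (arbKernel lam a q θ) := by
  constructor
  have hA : ∫⁻ θ', ENNReal.ofReal (a θ θ' * q θ θ') ∂lam =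
      ENNReal.ofReal (acceptProb lam a q θ) :=
    (ofReal_integral_eq_lintegral_ofReal (h.integrable_mul θ)
      (ae_of_all _ fun θ' => mul_nonneg (h.a_mem_Icc θ θ').1 (h.q_nonneg θ θ'))).symm
  simp only [arbKernel, Measure.add_apply, Measure.smul_apply, smul_eq_mul,
    withDensity_apply _ MeasurableSet.univ, Measure.restrict_univ, hA, measure_univ, mul_one]
  rw [← ENNReal.ofReal_add (h.acceptProb_nonneg θ) (sub_nonneg.2 (h.acceptProb_le_one θ))]
  simp

lemma measurable_arbKernel [SFinite lam] (h : IsARBPair lam a q) :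
    Measurable (arbKernel lam a q) := by
  have hmul : Measurable fun p : Ω × Ω => a p.1 p.2 * q p.1 p.2 :=
    h.measurable_a.mul h.measurable_q
  have hmove : Measurable (Function.uncurry fun θ θ' => ENNReal.ofReal (a θ θ' * q θ θ')) :=
    hmul.ennreal_ofReal
  have hA : Measurable (acceptProb lam a q) :=
    hmul.stronglyMeasurable.integral_prod_right'.measurable
  have hstay : Measurable (Function.uncurry
      fun θ (_ : Ω) => ENNReal.ofReal (1 - acceptProb lam a q θ)) :=
    (measurable_const.sub hA).ennreal_ofReal.comp measurable_fst
  have hkernel : arbKernel lam a q =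
      ⇑(Kernel.withDensity (Kernel.const Ω lam) (fun θ θ' => ENNReal.ofReal (a θ θ' * q θ θ')) +
        Kernel.withDensity Kernel.id fun θ _ => ENNReal.ofReal (1 - acceptProb lam a q θ)) := by
    funext θ
    rw [add_apply, Kernel.withDensity_apply _ hmove, Kernel.withDensity_apply _ hstay,
      Kernel.const_apply, Kernel.id_apply, withDensity_const]
    rfl
  rw [hkernel]
  exact Kernel.measurable _

end IsARBPair

lemma arbKernel_apply_singleton {lam : Measure Ω} {a q : Ω → Ω → ℝ} {θ : Ω}
    (hθ : MeasurableSet {θ}) (hlθ : lam {θ} = 0) :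
    arbKernel lam a q θ {θ} = ENNReal.ofReal (1 - acceptProb lam a q θ) := by
  simp [arbKernel, withDensity_apply _ hθ, Measure.restrict_eq_zero.mpr hlθ]

lemma acceptProb_mono {lam : Measure Ω} {a₁ a₂ q : Ω → Ω → ℝ} (h₁ : IsARBPair lam a₁ q)
    (ha₂ : ∀ θ θ', 0 ≤ a₂ θ θ') (hle : ∀ θ θ', a₂ θ θ' ≤ a₁ θ θ') (θ : Ω) :
    acceptProb lam a₂ q θ ≤ acceptProb lam a₁ q θ :=
  integral_mono_of_nonneg (ae_of_all _ fun θ' => mul_nonneg (ha₂ θ θ') (h₁.q_nonneg θ θ'))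
    (h₁.integrable_mul θ)
    (ae_of_all _ fun θ' => mul_le_mul_of_nonneg_right (hle θ θ') (h₁.q_nonneg θ θ'))

theorem arb_tv_lower_bound_compare_general
    (lam : Measure Ω) [SigmaFinite lam]
    (Pi : Measure Ω)
    (Θ : Set Ω)
    (pi : Ω → ℝ)
    (hdens : Pi = lam.withDensity (fun x => ENNReal.ofReal (pi x)))
    (hsing : ∀ θ ∈ Θ, MeasurableSet {θ} ∧ lam {θ} = 0)
    (a₁ a₂ q : Ω → Ω → ℝ)
    (ha₁m : Measurable (Function.uncurry a₁)) (ha₂m : Measurable (Function.uncurry a₂))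
    (hqm : Measurable (Function.uncurry q))
    (ha₁01 : ∀ θ θ', a₁ θ θ' ∈ Set.Icc (0:ℝ) 1)
    (ha₂01 : ∀ θ θ', a₂ θ θ' ∈ Set.Icc (0:ℝ) 1)
    (hq0 : ∀ θ θ', 0 ≤ q θ θ') (hq1 : ∀ θ, ∫ θ', q θ θ' ∂lam = 1)
    (hcomp : ∀ θ θ', a₂ θ θ' ≤ a₁ θ θ')
    (t : ℕ) (θ : Ω) (hθ : θ ∈ Θ) :
    (1 - acceptProb lam a₁ q θ) ^ t ≤ (1 - acceptProb lam a₂ q θ) ^ t ∧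
      (1 - acceptProb lam a₂ q θ) ^ t ≤ tvDist (iterK (arbKernel lam a₂ q) t θ) Pi := by
  have h₁ : IsARBPair lam a₁ q := ⟨ha₁m, hqm, ha₁01, hq0, hq1⟩
  have h₂ : IsARBPair lam a₂ q := ⟨ha₂m, hqm, ha₂01, hq0, hq1⟩
  obtain ⟨hθm, hlθ⟩ := hsing θ hθ
  refine ⟨pow_le_pow_left₀ (sub_nonneg.2 (h₁.acceptProb_le_one θ))
    (sub_le_sub_left (acceptProb_mono h₁ (fun θ θ' => (ha₂01 θ θ').1) hcomp θ) 1) t, ?_⟩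
  have hstay : 0 ≤ 1 - acceptProb lam a₂ q θ := sub_nonneg.2 (h₂.acceptProb_le_one θ)
  have := h₂.isProbabilityMeasure_arbKernel
  have := isProbabilityMeasure_iterK h₂.measurable_arbKernel t θ
  have hPi : Pi.real {θ} = 0 := by
    rw [measureReal_def, hdens, withDensity_absolutelyContinuous _ _ hlθ, ENNReal.toReal_zero]
  calc (1 - acceptProb lam a₂ q θ) ^ t
      = (arbKernel lam a₂ q θ {θ} ^ t).toReal := by
        rw [arbKernel_apply_singleton hθm hlθ, ← ENNReal.ofReal_pow hstay,
          ENNReal.toReal_ofReal (pow_nonneg hstay t)]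
    _ ≤ (iterK (arbKernel lam a₂ q) t θ).real {θ} - Pi.real {θ} := by
        rw [hPi, sub_zero]
        exact ENNReal.toReal_mono (measure_ne_top _ _)
          (pow_apply_singleton_le_iterK_apply h₂.measurable_arbKernel hθm t)
    _ ≤ tvDist (iterK (arbKernel lam a₂ q) t θ) Pi := measureReal_sub_le_tvDist _ _ hθm

/-- Corollary 1: if `a₁ ≥ a₂` pointwise, then for every `t ∈ ℤ₊` and `θ ∈ Θ`,
`‖P₂^t(θ,·) − Π‖_TV ≥ (1 − A₂(θ))^t ≥ (1 − A₁(θ))^t`. -/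
theorem arb_tv_lower_bound_compare
    (lam : Measure Ω) [SigmaFinite lam]
    (Pi : Measure Ω) [IsProbabilityMeasure Pi]
    (Θ : Set Ω) (hΘne : Θ.Nonempty) (hΘmeas : MeasurableSet Θ)
    (pi : Ω → ℝ) (hpim : Measurable pi)
    (hdens : Pi = lam.withDensity (fun x => ENNReal.ofReal (pi x)))
    (hpos : ∀ θ ∈ Θ, 0 < pi θ) (hzero : ∀ θ ∉ Θ, pi θ = 0)
    (hsing : ∀ θ ∈ Θ, MeasurableSet {θ} ∧ lam {θ} = 0)
    (a₁ a₂ q : Ω → Ω → ℝ)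
    (ha₁m : Measurable (Function.uncurry a₁)) (ha₂m : Measurable (Function.uncurry a₂))
    (hqm : Measurable (Function.uncurry q))
    (ha₁01 : ∀ θ θ', a₁ θ θ' ∈ Set.Icc (0:ℝ) 1)
    (ha₂01 : ∀ θ θ', a₂ θ θ' ∈ Set.Icc (0:ℝ) 1)
    (hq0 : ∀ θ θ', 0 ≤ q θ θ') (hq1 : ∀ θ, ∫ θ', q θ θ' ∂lam = 1)
    (hinv₁ : Pi.bind (arbKernel lam a₁ q) = Pi)
    (hinv₂ : Pi.bind (arbKernel lam a₂ q) = Pi)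
    (hcomp : ∀ θ θ', a₂ θ θ' ≤ a₁ θ θ')
    (t : ℕ) (ht : 1 ≤ t) (θ : Ω) (hθ : θ ∈ Θ) :
    (1 - acceptProb lam a₁ q θ) ^ t ≤ (1 - acceptProb lam a₂ q θ) ^ t ∧
      (1 - acceptProb lam a₂ q θ) ^ t ≤ tvDist (iterK (arbKernel lam a₂ q) t θ) Pi :=
  arb_tv_lower_bound_compare_general lam Pi Θ pi hdens hsing a₁ a₂ q ha₁m ha₂m hqm ha₁01 ha₂01 hq0
    hq1 hcomp t θ hθ
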